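/- arXiv:2107.08539 — 3 statements merged into one kernel-verified Lean document; each statement's English description precedes it below -/
import Mathlib

section
/- Let a ≥ 0 and define g : ℝ² → ℝ by g(k) = ‖k‖⁴ − (a+2)‖k‖². Then g is concave on the closed ball of radius √((a+2)/6) centered at the origin. -/
/-!
Write `g(k) = φ(‖k‖)` with `φ(x) = x⁴ − (a+2)x²`. Since `φ'' = 12x² − 2(a+2)`, the profile `φ`
is concave for `x² ≤ (a+2)/6`, and since `φ' = 2x(2x² − (a+2))` it is decreasing on the same
range of `x ≥ 0`. A concave, decreasing function of the convex function `‖·‖` is concave.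
-/

open Set Metric

theorem ConcaveOn.comp_norm_closedBall {E : Type*} [SeminormedAddCommGroup E] [NormedSpace ℝ E]
    {φ : ℝ → ℝ} {r : ℝ} (hφ : ConcaveOn ℝ (Icc 0 r) φ) (hφ' : AntitoneOn φ (Icc 0 r)) :
    ConcaveOn ℝ (closedBall (0 : E) r) (fun k => φ ‖k‖) := by
  refine ⟨convex_closedBall _ _, fun x hx y hy s t hs ht hst => ?_⟩
  have hx' : ‖x‖ ∈ Icc 0 r := ⟨norm_nonneg _, mem_closedBall_zero_iff.1 hx⟩
  have hy' : ‖y‖ ∈ Icc 0 r := ⟨norm_nonneg _, mem_closedBall_zero_iff.1 hy⟩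
  have hmix : s • ‖x‖ + t • ‖y‖ ∈ Icc 0 r := hφ.1 hx' hy' hs ht hst
  have htriangle : ‖s • x + t • y‖ ≤ s • ‖x‖ + t • ‖y‖ :=
    (convexOn_norm convex_univ).2 trivial trivial hs ht hst
  calc s • φ ‖x‖ + t • φ ‖y‖ ≤ φ (s • ‖x‖ + t • ‖y‖) := hφ.2 hx' hy' hs ht hst
    _ ≤ φ ‖s • x + t • y‖ := hφ' ⟨norm_nonneg _, htriangle.trans hmix.2⟩ hmix htriangle

section Quartic

variable (c : ℝ)

theorem hasDerivAt_quartic (x : ℝ) :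
    HasDerivAt (fun x : ℝ => x ^ 4 - c * x ^ 2) (4 * x ^ 3 - 2 * c * x) x :=
  ((hasDerivAt_pow 4 x).sub ((hasDerivAt_pow 2 x).const_mul c)).congr_deriv (by push_cast; ring)

theorem hasDerivAt_quartic_deriv (x : ℝ) :
    HasDerivAt (fun x : ℝ => 4 * x ^ 3 - 2 * c * x) (12 * x ^ 2 - 2 * c) x :=
  (((hasDerivAt_pow 3 x).const_mul 4).sub ((hasDerivAt_id' x).const_mul (2 * c))).congr_deriv
    (by push_cast; ring)

variable {c}

theorem concaveOn_quartic {r : ℝ} (hr : 6 * r ^ 2 ≤ c) :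
    ConcaveOn ℝ (Icc (-r) r) (fun x : ℝ => x ^ 4 - c * x ^ 2) := by
  refine concaveOn_of_hasDerivWithinAt2_nonpos (convex_Icc _ _) (by fun_prop)
    (fun x _ => (hasDerivAt_quartic c x).hasDerivWithinAt)
    (fun x _ => (hasDerivAt_quartic_deriv c x).hasDerivWithinAt) fun x hx => ?_
  obtain ⟨hrx, hxr⟩ : -r < x ∧ x < r := by rwa [interior_Icc] at hx
  nlinarith [mul_pos (sub_pos.2 hrx) (sub_pos.2 hxr)]

theorem antitoneOn_quartic {r : ℝ} (hr : 2 * r ^ 2 ≤ c) :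
    AntitoneOn (fun x : ℝ => x ^ 4 - c * x ^ 2) (Icc 0 r) := by
  refine antitoneOn_of_hasDerivWithinAt_nonpos (convex_Icc _ _) (by fun_prop)
    (fun x _ => (hasDerivAt_quartic c x).hasDerivWithinAt) fun x hx => ?_
  obtain ⟨hx0, hxr⟩ : 0 < x ∧ x < r := by rwa [interior_Icc] at hx
  nlinarith [mul_pos hx0 (sub_pos.2 hxr), mul_pos hx0 (mul_pos hx0 (sub_pos.2 hxr))]

end Quartic

/-- For `a ≥ 0`, the function `g(k) = ‖k‖⁴ − (a+2)‖k‖²` on ℝ² is concave on the closed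
ball of radius `√((a+2)/6)` about the origin. -/
theorem stmt_3 (a : ℝ) (ha : 0 ≤ a) :
    ConcaveOn ℝ (Metric.closedBall (0 : EuclideanSpace ℝ (Fin 2)) (Real.sqrt ((a + 2) / 6)))
      (fun k : EuclideanSpace ℝ (Fin 2) => ‖k‖ ^ 4 - (a + 2) * ‖k‖ ^ 2) := by
  set r := Real.sqrt ((a + 2) / 6)
  have hr : 6 * r ^ 2 = a + 2 := by
    rw [Real.sq_sqrt (by linarith)]
    ring
  have hr0 : 0 ≤ r := Real.sqrt_nonneg _
  have hconc : ConcaveOn ℝ (Icc 0 r) (fun x : ℝ => x ^ 4 - (a + 2) * x ^ 2) :=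
    (concaveOn_quartic hr.le).subset (Icc_subset_Icc (by linarith) le_rfl) (convex_Icc 0 r)
  exact hconc.comp_norm_closedBall (antitoneOn_quartic (by nlinarith))
end

section
/- Let J : ℝⁿ → ℝ be convex, let H : ℝⁿ → ℝ be convex and Fréchet differentiable with gradient ∇H, let λ > 0, let v, p ∈ ℝⁿ with p a subgradient of J at v, and suppose u⁺ minimizes u ↦ J(u) − J(v) − ⟨p, u − v⟩ + λ H(u) over ℝⁿ. Then p − λ ∇H(u⁺) is a subgradient of J at u⁺. -/
open Set RealInnerProductSpace

/-!
If `x` minimizes `f + g` on a convex set with `f` convex, then along the segment from `x` to `y`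
convexity bounds `f` by its chord, so `t ↦ g (x + t • (y - x)) + t * (f y - f x)` is minimized
on `[0, 1]` at `t = 0`; its right derivative `g' (y - x) + f y - f x` is therefore nonnegative,
i.e. `-g'` is a subgradient of `f` at `x`. Applied to `f = J - ⟪p, ·⟫` and `g = lam * H` this is
the Bregman dual update.
-/

theorem ConvexOn.sub_fderiv_le_of_isMinOn_add {E : Type*} [NormedAddCommGroup E] [NormedSpace ℝ E]
    {s : Set E} {f g : E → ℝ} {g' : StrongDual ℝ E} {x y : E} (hf : ConvexOn ℝ s f)
    (hg : HasFDerivAt g g' x) (hmin : IsMinOn (f + g) s x) (hx : x ∈ s) (hy : y ∈ s) :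
    f x - g' (y - x) ≤ f y := by
  set ψ : ℝ → ℝ := fun t => g (x + t • (y - x)) + t * (f y - f x)
  have hψ_min : IsMinOn ψ (Icc 0 1) 0 := by
    intro t ht
    have hchord : f (x + t • (y - x)) ≤ f x + t * (f y - f x) := by
      have h := hf.2 hx hy (sub_nonneg.2 ht.2) ht.1 (sub_add_cancel 1 t)
      rw [show (1 - t) • x + t • y = x + t • (y - x) by module, smul_eq_mul, smul_eq_mul] at h
      linarith
    have hle := hmin (hf.1.add_smul_sub_mem hx hy ht)
    simp only [mem_ofPred_eq, Pi.add_apply] at hle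
    simp only [ψ, zero_smul, add_zero, zero_mul, mem_ofPred_eq]
    linarith
  have hψ_deriv : HasDerivAt ψ (g' (y - x) + (f y - f x)) 0 := by
    have hline : HasDerivAt (fun t : ℝ => x + t • (y - x)) (y - x) 0 := by
      simpa using ((hasDerivAt_id (0 : ℝ)).smul_const (y - x)).const_add x
    have hg0 : HasFDerivAt g g' (x + (0 : ℝ) • (y - x)) := by simpa using hg
    have h := (hg0.comp_hasDerivAt 0 hline).add ((hasDerivAt_id 0).mul_const (f y - f x))
    rw [one_mul] at h
    exact h
  have hone : (1 : ℝ) ∈ posTangentConeAt (Icc 0 1) 0 :=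
    mem_posTangentConeAt_of_segment_subset (by simp [segment_eq_Icc])
  have hnonneg :=
    hψ_min.localize.hasFDerivWithinAt_nonneg hψ_deriv.hasFDerivAt.hasFDerivWithinAt hone
  rw [ContinuousLinearMap.toSpanSingleton_apply, one_smul] at hnonneg
  linarith

theorem stmt_6_general (n : ℕ) (J H : EuclideanSpace ℝ (Fin n) → ℝ)
    (hJ : ConvexOn ℝ Set.univ J)
    (gradH : EuclideanSpace ℝ (Fin n) → EuclideanSpace ℝ (Fin n))
    (hgradH : ∀ x, HasGradientAt H (gradH x) x)
    (lam : ℝ)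
    (v p uplus : EuclideanSpace ℝ (Fin n))
    (hmin : ∀ u, J uplus - J v - ⟪p, uplus - v⟫ + lam * H uplus
      ≤ J u - J v - ⟪p, u - v⟫ + lam * H u) :
    ∀ u, J uplus + ⟪p - lam • gradH uplus, u - uplus⟫ ≤ J u := by
  intro u
  have hconv : ConvexOn ℝ univ fun w => J w - ⟪p, w⟫ :=
    hJ.sub ((innerₛₗ ℝ p).concaveOn convex_univ)
  have hopt : IsMinOn ((fun w => J w - ⟪p, w⟫) + fun w => lam * H w) univ uplus := by
    intro w _
    have hw := hmin w
    simp only [inner_sub_right, mem_ofPred_eq, Pi.add_apply] at hw ⊢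
    linarith
  have hsub := hconv.sub_fderiv_le_of_isMinOn_add ((hgradH uplus).hasFDerivAt.const_mul lam)
    hopt (mem_univ _) (mem_univ u)
  simp only [FunLike.coe_smul, Pi.smul_apply, InnerProductSpace.toDual_apply_apply,
    smul_eq_mul] at hsub
  rw [inner_sub_left, real_inner_smul_left, inner_sub_right]
  linarith

/-- Bregman dual update: if `p` is a subgradient of the convex function `J` at `v`, `H` is
convex and differentiable with gradient `∇H`, and `u⁺` minimizes
`u ↦ J(u) − J(v) − ⟨p, u − v⟩ + λH(u)`, then `p − λ∇H(u⁺)` is a subgradient of `J` at `u⁺`. -/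
theorem stmt_6 (n : ℕ) (J H : EuclideanSpace ℝ (Fin n) → ℝ)
    (hJ : ConvexOn ℝ Set.univ J) (hH : ConvexOn ℝ Set.univ H)
    (gradH : EuclideanSpace ℝ (Fin n) → EuclideanSpace ℝ (Fin n))
    (hgradH : ∀ x, HasGradientAt H (gradH x) x)
    (lam : ℝ) (hlam : 0 < lam)
    (v p uplus : EuclideanSpace ℝ (Fin n))
    (hp : ∀ u, J v + ⟪p, u - v⟫ ≤ J u)
    (hmin : ∀ u, J uplus - J v - ⟪p, uplus - v⟫ + lam * H uplus
      ≤ J u - J v - ⟪p, u - v⟫ + lam * H u) :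
    ∀ u, J uplus + ⟪p - lam • gradH uplus, u - uplus⟫ ≤ J u :=
  stmt_6_general n J H hJ gradH hgradH lam v p uplus hmin
end

section
/- Let J : ℝⁿ → ℝ be convex, let H : ℝⁿ → ℝ be any function, let λ > 0, let v, p ∈ ℝⁿ with p a subgradient of J at v, and suppose u⁺ minimizes u ↦ J(u) − J(v) − ⟨p, u − v⟩ + λ H(u) over ℝⁿ. Then H(u⁺) ≤ H(v). -/
open RealInnerProductSpace

/-- Monotone decrease of `H` along a Bregman step: if `p` is a subgradient of the convex
function `J` at `v` and `u⁺` minimizes `u ↦ J(u) − J(v) − ⟨p, u − v⟩ + λH(u)`,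
then `H(u⁺) ≤ H(v)`. -/
theorem stmt_7 (n : ℕ) (J H : EuclideanSpace ℝ (Fin n) → ℝ)
    (hJ : ConvexOn ℝ Set.univ J)
    (lam : ℝ) (hlam : 0 < lam)
    (v p uplus : EuclideanSpace ℝ (Fin n))
    (hp : ∀ u, J v + ⟪p, u - v⟫ ≤ J u)
    (hmin : ∀ u, J uplus - J v - ⟪p, uplus - v⟫ + lam * H uplus
      ≤ J u - J v - ⟪p, u - v⟫ + lam * H u) :
    H uplus ≤ H v := by
  have h1 := hmin v
  have h2 := hp uplus
  have hz : (⟪p, v - v⟫ : ℝ) = 0 := by simp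
  rw [hz] at h1
  have : lam * H uplus ≤ lam * H v := by linarith
  exact le_of_mul_le_mul_left this hlam
end
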